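/- arXiv:math/9502213 — 4 statements merged into one kernel-verified Lean document; each statement's English description precedes it below -/
import Mathlib

section
/- The Abel polynomials A_n(x) = x(x+n)^{n-1} (with A_0 = 1) form a sequence of binomial type: A_n(x+y) = ∑_{k=0}^{n} C(n,k) A_k(x) A_{n-k}(y) for all n and all x, y. -/
/-!
A sequence with `p 0 = 1`, `p (n + 1) (0) = 0` and `p (n + 1)' = (n + 1) • p n (X + a)` is the
basic sequence of the shift-invariant delta operator `D ∘ Eᵃ`, hence of binomial type: for fixed
`y`, both `p n (X + y)` and `∑ₖ C(n, k) p (n - k) (y) p k (X)` obey this derivative recursion and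
agree at `X = 0`, so they coincide by induction on `n`. The Abel polynomials satisfy the recursion
with `a = 1`, since `(X (X + n + 1)ⁿ)' = (n + 1) (X + 1) (X + n + 1)ⁿ⁻¹`.
-/

open Polynomial

noncomputable def abelPoly (n : ℕ) : Polynomial ℚ :=
  if n = 0 then 1 else X * (X + (n : Polynomial ℚ)) ^ (n - 1)

open Finset

namespace Polynomial

variable {R : Type*} [CommRing R]

def IsBinomialType (p : ℕ → R[X]) : Prop :=
  ∀ n x y, (p n).eval (x + y) =
    ∑ k ∈ range (n + 1), (n.choose k : R) * (p k).eval x * (p (n - k)).eval y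

theorem eq_of_derivative_eq_of_eval_zero_eq [IsAddTorsionFree R] {f g : R[X]}
    (hd : derivative f = derivative g) (h0 : f.eval 0 = g.eval 0) : f = g := by
  have hconst := eq_C_of_derivative_eq_zero (p := f - g) (by rw [derivative_sub, hd, sub_self])
  rw [coeff_zero_eq_eval_zero, eval_sub, h0, sub_self, map_zero] at hconst
  exact sub_eq_zero.mp hconst

theorem X_add_C_comp_X_add_C (a b : R) : (X + C a).comp (X + C b) = (X + C b).comp (X + C a) := by
  simp only [add_comp, X_comp, C_comp]
  ring

noncomputable def binomialConv (p : ℕ → R[X]) (y : R) (n : ℕ) : R[X] :=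
  ∑ k ∈ range (n + 1), C (n.choose k * (p (n - k)).eval y) * p k

section DerivativeRecursion

variable {p : ℕ → R[X]} {a : R}

theorem derivative_binomialConv
    (h0 : p 0 = 1) (hderiv : ∀ n, derivative (p (n + 1)) = (n + 1) • (p n).comp (X + C a))
    (y : R) (n : ℕ) :
    derivative (binomialConv p y (n + 1)) = (n + 1) • (binomialConv p y n).comp (X + C a) := by
  rw [binomialConv, binomialConv, derivative_sum, sum_range_succ', sum_comp, smul_sum]
  simp only [derivative_mul, derivative_C, zero_mul, zero_add, h0, derivative_one, mul_zero,
    add_zero, hderiv, mul_comp, C_comp, mul_smul_comm, Nat.add_sub_add_right]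
  refine sum_congr rfl fun k _ => ?_
  have hchoose : ((k + 1) * (n + 1).choose (k + 1) : R) = (n + 1) * n.choose k := by
    exact_mod_cast congrArg (Nat.cast : ℕ → R)
      ((mul_comm _ _).trans (Nat.add_one_mul_choose_eq n k).symm)
  rw [nsmul_eq_mul, nsmul_eq_mul, ← mul_assoc, ← mul_assoc, ← C_eq_natCast, ← C_eq_natCast,
    ← C_mul, ← C_mul, ← mul_assoc, ← mul_assoc]
  push_cast
  rw [hchoose]

theorem eval_zero_binomialConv (h0 : p 0 = 1) (heval : ∀ n, (p (n + 1)).eval 0 = 0) (y : R)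
    (n : ℕ) : (binomialConv p y n).eval 0 = (p n).eval y := by
  simp [binomialConv, eval_finsetSum, sum_range_succ', heval, h0]

theorem comp_X_add_C_eq_binomialConv [IsAddTorsionFree R] (h0 : p 0 = 1)
    (heval : ∀ n, (p (n + 1)).eval 0 = 0)
    (hderiv : ∀ n, derivative (p (n + 1)) = (n + 1) • (p n).comp (X + C a)) (y : R) (n : ℕ) :
    (p n).comp (X + C y) = binomialConv p y n := by
  induction n with
  | zero => simp [binomialConv, h0]
  | succ n ih =>
    refine eq_of_derivative_eq_of_eval_zero_eq ?_ ?_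
    · rw [derivative_binomialConv h0 hderiv, ← ih, derivative_comp, hderiv, derivative_add,
        derivative_X, derivative_C, add_zero, one_mul, smul_comp, comp_assoc, comp_assoc,
        X_add_C_comp_X_add_C]
    · simp [eval_zero_binomialConv h0 heval, eval_comp]

theorem IsBinomialType.of_derivative_eq_nsmul_comp [IsAddTorsionFree R] (h0 : p 0 = 1)
    (heval : ∀ n, (p (n + 1)).eval 0 = 0)
    (hderiv : ∀ n, derivative (p (n + 1)) = (n + 1) • (p n).comp (X + C a)) :
    IsBinomialType p := by
  intro n x y
  have hx := congrArg (eval x) (comp_X_add_C_eq_binomialConv h0 heval hderiv y n)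
  simp only [eval_comp, eval_add, eval_X, eval_C, binomialConv, eval_finsetSum, eval_mul] at hx
  rw [hx]
  exact sum_congr rfl fun k _ => by ring

end DerivativeRecursion

end Polynomial

theorem abelPoly_zero : abelPoly 0 = 1 := rfl

theorem abelPoly_succ (n : ℕ) : abelPoly (n + 1) = X * (X + ((n : ℚ[X]) + 1)) ^ n := by
  simp [abelPoly]

theorem eval_zero_abelPoly_succ (n : ℕ) : (abelPoly (n + 1)).eval 0 = 0 := by
  simp [abelPoly_succ]

theorem derivative_abelPoly_succ (n : ℕ) :
    derivative (abelPoly (n + 1)) = (n + 1) • (abelPoly n).comp (X + C 1) := by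
  cases n with
  | zero => simp [abelPoly]
  | succ m =>
    simp only [abelPoly_succ, derivative_mul, derivative_X, derivative_pow,
      derivative_natCast, derivative_one, mul_comp, pow_comp, add_comp, X_comp, natCast_comp,
      one_comp, map_one, map_add, map_natCast, nsmul_eq_mul]
    push_cast
    ring

theorem isBinomialType_abelPoly : IsBinomialType abelPoly :=
  .of_derivative_eq_nsmul_comp abelPoly_zero eval_zero_abelPoly_succ derivative_abelPoly_succ

/-- The Abel polynomials are of binomial type (Abel's binomial identity). -/
theorem abel_binomial_type (n : ℕ) (x y : ℚ) :
    (abelPoly n).eval (x + y) =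
      ∑ k ∈ Finset.range (n + 1),
        (n.choose k : ℚ) * (abelPoly k).eval x * (abelPoly (n - k)).eval y :=
  isBinomialType_abelPoly n x y
end

section
/- Expansion theorem: if T is a linear operator on ℚ[x] that commutes with all shift operators E^a, then for every polynomial p of degree at most n, T p = ∑_{k=0}^{n} a_k d^k p / k!, where a_k = (T x^k)(0) evaluated appropriately; i.e., T is determined by the constants c_k = (T x^k) evaluated at 0 via T = ∑_k c_k d^k/k!. -/
/-!
Shift invariance gives `(T p)(a) = (T (p(X + a)))(0)`, and by Taylor's formula
`p(X + a) = ∑ₖ (dᵏp)(a) / k! • Xᵏ`. Applying the linear map `T` and evaluating at `0`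
turns this into `∑ₖ cₖ (dᵏp)(a) / k!` with `cₖ = (T Xᵏ)(0)`, which is the right-hand side at `a`.
-/

open Polynomial Nat

namespace Polynomial

section Taylor

variable {K : Type*} [Field K] [CharZero K]

theorem eval_hasseDeriv_eq_eval_iterate_derivative_div_factorial (k : ℕ) (p : K[X]) (a : K) :
    (hasseDeriv k p).eval a = (derivative^[k] p).eval a / k ! := by
  rw [← factorial_smul_hasseDeriv, LinearMap.smul_apply, ← Nat.cast_smul_eq_nsmul K, eval_smul,
    smul_eq_mul, mul_div_cancel_left₀ _ (Nat.cast_ne_zero.2 k.factorial_ne_zero)]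

theorem comp_X_add_C_eq_sum_range {p : K[X]} {n : ℕ} (hp : p.natDegree < n + 1) (a : K) :
    p.comp (X + C a) =
      ∑ k ∈ Finset.range (n + 1), ((derivative^[k] p).eval a / k !) • X ^ k := by
  rw [← taylor_apply, (taylor a p).as_sum_range' (n + 1) (by rwa [natDegree_taylor])]
  refine Finset.sum_congr rfl fun k _ => ?_
  rw [taylor_coeff, eval_hasseDeriv_eq_eval_iterate_derivative_div_factorial,
    ← C_mul_X_pow_eq_monomial, smul_eq_C_mul]

end Taylor

theorem eval_eq_eval_zero_apply_comp_X_add_C {R : Type*} [CommSemiring R] {T : R[X] → R[X]}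
    (hT : ∀ (a : R) (p : R[X]), T (p.comp (X + C a)) = (T p).comp (X + C a)) (p : R[X]) (a : R) :
    (T p).eval a = (T (p.comp (X + C a))).eval 0 := by
  rw [hT, eval_comp, eval_add, eval_X, eval_C, zero_add]

end Polynomial

/-- Expansion theorem: a shift-invariant linear operator `T` on `ℚ[x]` satisfies
`T = ∑_k c_k d^k / k!` where `c_k = (T x^k)(0)`. -/
theorem expansion_theorem (T : Polynomial ℚ →ₗ[ℚ] Polynomial ℚ)
    (hT : ∀ (a : ℚ) (p : Polynomial ℚ), T (p.comp (X + C a)) = (T p).comp (X + C a)) :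
    ∀ (p : Polynomial ℚ) (n : ℕ), p.degree ≤ n →
      T p = ∑ k ∈ Finset.range (n + 1),
        C ((T (X ^ k)).eval 0 / (k.factorial : ℚ)) * derivative^[k] p := by
  intro p n hdeg
  have hp : p.natDegree < n + 1 := Nat.lt_succ_of_le (natDegree_le_iff_degree_le.2 hdeg)
  refine Polynomial.funext fun a => ?_
  rw [eval_eq_eval_zero_apply_comp_X_add_C hT, comp_X_add_C_eq_sum_range hp, map_sum,
    eval_finsetSum, eval_finsetSum]
  refine Finset.sum_congr rfl fun k _ => ?_
  rw [map_smul, eval_smul, smul_eq_mul, eval_mul, eval_C]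
  ring
end

section
/- Any shift-invariant linear operator on ℚ[x] commutes with the derivative operator d. -/
/-!
Taylor's formula `p(X + a) = ∑ⱼ aʲ • Dⱼ p` (with `Dⱼ` the Hasse derivatives) turns
`T (p(X + a)) = (T p)(X + a)` into an identity `∑ⱼ aʲ • (T (Dⱼ p) - Dⱼ (T p)) = 0` between
polynomials in `a`. Over an infinite domain it holds for infinitely many `a`, so every
coefficient vanishes: `T` commutes with every `Dⱼ`, in particular with `D₁ = d`.
-/

open Polynomial Finset

namespace Polynomial

variable {R : Type*} [CommRing R]

theorem taylor_eq_sum_range_pow_smul_hasseDeriv (f : R[X]) (r : R) {N : ℕ}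
    (hN : f.natDegree < N) :
    taylor r f = ∑ j ∈ range N, r ^ j • hasseDeriv j f := by
  ext n
  have hdeg : (hasseDeriv n f).natDegree < N :=
    (natDegree_hasseDeriv_le f n).trans_lt ((Nat.sub_le _ _).trans_lt hN)
  rw [taylor_coeff, eval_eq_sum_range' hdeg, finsetSum_coeff]
  refine sum_congr rfl fun j _ => ?_
  rw [coeff_smul, smul_eq_mul, hasseDeriv_coeff, hasseDeriv_coeff, add_comm j n,
    Nat.choose_symm_add]
  ring

variable [IsDomain R] [Infinite R]

theorem eq_zero_of_forall_sum_range_mul_pow_eq_zero {N : ℕ} {c : ℕ → R}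
    (h : ∀ a : R, ∑ j ∈ range N, c j * a ^ j = 0) {j : ℕ} (hj : j < N) : c j = 0 := by
  have hzero : ∑ i ∈ range N, C (c i) * X ^ i = 0 :=
    Polynomial.funext fun a => by simpa [eval_finsetSum] using h a
  simpa [finsetSum_coeff, coeff_C_mul_X_pow, hj] using congrArg (coeff · j) hzero

theorem eq_zero_of_forall_sum_range_pow_smul_eq_zero {N : ℕ} {v : ℕ → R[X]}
    (h : ∀ a : R, ∑ j ∈ range N, a ^ j • v j = 0) {j : ℕ} (hj : j < N) : v j = 0 := by
  ext n
  refine eq_zero_of_forall_sum_range_mul_pow_eq_zero (c := fun j => (v j).coeff n)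
    (fun a => ?_) hj
  simpa [finsetSum_coeff, mul_comm] using congrArg (coeff · n) (h a)

theorem hasseDeriv_comm_of_taylor_comm (T : R[X] →ₗ[R] R[X])
    (hT : ∀ (a : R) (p : R[X]), T (taylor a p) = taylor a (T p)) (k : ℕ) (p : R[X]) :
    T (hasseDeriv k p) = hasseDeriv k (T p) := by
  set N := p.natDegree + (T p).natDegree + k + 1
  refine sub_eq_zero.mp <| eq_zero_of_forall_sum_range_pow_smul_eq_zero
    (v := fun j => T (hasseDeriv j p) - hasseDeriv j (T p)) (fun a => ?_) (by omega : k < N)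
  have hshift := hT a p
  rw [taylor_eq_sum_range_pow_smul_hasseDeriv p a (N := N) (by omega),
    taylor_eq_sum_range_pow_smul_hasseDeriv (T p) a (N := N) (by omega), map_sum] at hshift
  simp only [LinearMap.map_smul] at hshift
  simp only [smul_sub, sum_sub_distrib, hshift, sub_self]

end Polynomial

/-- Any shift-invariant linear operator on `ℚ[x]` commutes with the derivative. -/
theorem shift_invariant_commutes_with_derivative (T : Polynomial ℚ →ₗ[ℚ] Polynomial ℚ)
    (hT : ∀ (a : ℚ) (p : Polynomial ℚ), T (p.comp (X + C a)) = (T p).comp (X + C a)) :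
    ∀ p : Polynomial ℚ, T (derivative p) = derivative (T p) := by
  intro p
  simpa only [hasseDeriv_one'] using
    hasseDeriv_comm_of_taylor_comm T (fun a q => by simpa only [taylor_apply] using hT a q) 1 p
end

section
/- If Q is a delta operator (a shift-invariant linear operator with Q(x) a nonzero constant), then Q(c) = 0 for every constant polynomial c, and Q lowers degree by exactly one: deg(Qp) = deg(p) - 1 for every nonconstant polynomial p. -/
/-!
Write `Δ q = taylor 1 q - q` for the forward difference. Comparing the coefficients of
`taylor 1 q = q(X + 1)` in degrees `m + 1` and `m` shows that `Δ` lowers the degree by exactly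
one, with top coefficient `(m + 1) * q.coeff (m + 1)`. Since `Q` commutes with `Δ`, the
polynomial `Δ (Q p) = Q (Δ p)` is controlled by induction on the degree of `p`, starting from
`Q (a X + b) = a c`; cancelling the factor `m + 1` then recovers the degree and top coefficient
of `Q p` itself.
-/

open Polynomial

namespace Polynomial

variable {R : Type*} [CommRing R]

theorem coeff_taylor_one_sub_self_of_natDegree_le {q : R[X]} {m : ℕ}
    (hq : q.natDegree ≤ m + 1) :
    (taylor 1 q - q).coeff m = (m + 1) * q.coeff (m + 1) := by
  have hdeg : (hasseDeriv m q).natDegree < 2 := by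
    have := natDegree_hasseDeriv_le q m
    omega
  -- `(taylor 1 q).coeff m` is the sum of the (two) coefficients of `hasseDeriv m q`
  rw [coeff_sub, taylor_coeff, eval_eq_sum_range' hdeg, Finset.sum_range_succ,
    Finset.sum_range_one]
  simp [hasseDeriv_coeff, add_comm 1 m]

theorem natDegree_taylor_one_sub_self [IsDomain R] [CharZero R] (q : R[X]) :
    (taylor 1 q - q).natDegree = q.natDegree - 1 := by
  rcases hq : q.natDegree with _ | m
  · rw [eq_C_of_natDegree_eq_zero hq, taylor_C, sub_self, natDegree_zero]
  rw [Nat.add_sub_cancel]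
  refine le_antisymm (natDegree_le_iff_coeff_eq_zero.mpr fun k hk => ?_)
    (le_natDegree_of_ne_zero ?_)
  · obtain rfl | hk : m + 1 = k ∨ m + 1 < k := by omega
    · rw [coeff_sub, ← hq, coeff_taylor_natDegree, sub_eq_zero]; rfl
    · rw [coeff_sub, coeff_eq_zero_of_natDegree_lt (by rwa [natDegree_taylor, hq]),
        coeff_eq_zero_of_natDegree_lt (by rwa [hq]), sub_self]
  · have hlc : q.coeff (m + 1) ≠ 0 := by
      rw [← hq]
      exact leadingCoeff_ne_zero.mpr (ne_zero_of_natDegree_gt (n := 0) (by omega))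
    rw [coeff_taylor_one_sub_self_of_natDegree_le hq.le]
    exact mul_ne_zero (by exact_mod_cast m.succ_ne_zero) hlc

section CommuteTaylor

variable {Q : R[X] →ₗ[R] R[X]} {c : R}

theorem map_C_eq_zero_of_commute_taylor_one (hQ : ∀ p, Q (taylor 1 p) = taylor 1 (Q p))
    (hX : Q X = C c) (a : R) : Q (C a) = 0 := by
  have hone : Q (C 1) = 0 := by
    simpa [taylor_X, hX, taylor_C] using hQ X
  rw [← mul_one a, C_mul, C_mul', map_smul, hone, smul_zero]

theorem map_eq_C_of_natDegree_le_one (hQ : ∀ p, Q (taylor 1 p) = taylor 1 (Q p))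
    (hX : Q X = C c) {p : R[X]} (hp : p.natDegree ≤ 1) : Q p = C (c * p.coeff 1) := by
  rw [eq_X_add_C_of_natDegree_le_one hp, map_add, C_mul', map_smul, hX, map_C_eq_zero_of_commute_taylor_one hQ hX, add_zero,
    smul_eq_C_mul, C_mul, mul_comm]
  simp

theorem natDegree_map_le_and_coeff_map [IsDomain R] [CharZero R]
    (hQ : ∀ p, Q (taylor 1 p) = taylor 1 (Q p)) (hX : Q X = C c) (n : ℕ) {p : R[X]}
    (hp : p.natDegree ≤ n + 1) :
    (Q p).natDegree ≤ n ∧ (Q p).coeff n = (n + 1) * c * p.coeff (n + 1) := by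
  induction n generalizing p with
  | zero =>
    rw [map_eq_C_of_natDegree_le_one hQ hX hp, natDegree_C, coeff_C_zero]
    simp
  | succ n ih =>
    have hΔp : (taylor 1 p - p).natDegree ≤ n + 1 := by
      rw [natDegree_taylor_one_sub_self]; omega
    obtain ⟨hdeg, hcoeff⟩ := ih hΔp
    have hΔQ : taylor 1 (Q p) - Q p = Q (taylor 1 p - p) := by rw [map_sub, hQ]
    have hQp : (Q p).natDegree ≤ n + 1 := by
      have := natDegree_taylor_one_sub_self (Q p)
      rw [hΔQ] at this
      omega
    refine ⟨hQp, mul_left_cancel₀ (n.cast_add_one_ne_zero (R := R)) ?_⟩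
    rw [← coeff_taylor_one_sub_self_of_natDegree_le hQp, hΔQ, hcoeff,
      coeff_taylor_one_sub_self_of_natDegree_le hp]
    push_cast
    ring

end CommuteTaylor

end Polynomial

/-- A delta operator annihilates constants and lowers degree by exactly one. -/
theorem delta_operator_props (Q : Polynomial ℚ →ₗ[ℚ] Polynomial ℚ)
    (hshift : ∀ (a : ℚ) (p : Polynomial ℚ), Q (p.comp (X + C a)) = (Q p).comp (X + C a))
    (hdelta : ∃ c : ℚ, c ≠ 0 ∧ Q X = C c) :
    (∀ c : ℚ, Q (C c) = 0) ∧
    (∀ p : Polynomial ℚ, 0 < p.degree → (Q p).natDegree = p.natDegree - 1 ∧ Q p ≠ 0) := by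
  obtain ⟨c, hc, hX⟩ := hdelta
  have hQ : ∀ p, Q (taylor 1 p) = taylor 1 (Q p) := by
    simpa only [taylor_apply] using hshift 1
  refine ⟨map_C_eq_zero_of_commute_taylor_one hQ hX, fun p hp => ?_⟩
  obtain ⟨n, hn⟩ := Nat.exists_eq_add_of_lt (natDegree_pos_iff_degree_pos.mpr hp)
  rw [zero_add] at hn
  obtain ⟨hdeg, hcoeff⟩ := natDegree_map_le_and_coeff_map hQ hX n hn.le
  have htop : (Q p).coeff n ≠ 0 := by
    rw [hcoeff, ← hn]
    exact mul_ne_zero (mul_ne_zero n.cast_add_one_ne_zero hc)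
      (leadingCoeff_ne_zero.mpr (ne_zero_of_degree_gt hp))
  refine ⟨?_, fun h => htop (by rw [h, coeff_zero])⟩
  rw [hn, Nat.add_sub_cancel]
  exact le_antisymm hdeg (le_natDegree_of_ne_zero htop)
end
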